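/- arXiv:2204.11197 — 2 statements merged into one kernel-verified Lean document; each statement's English description precedes it below -/
import Mathlib

section
/- Let D_n be defined recursively by D_n(t) = t² D_{n-1}'(t) with D_0(t) = t^{ν+1} e^{x t + y/t}, and set D_{-1} = D_{-2} = 0. Then for all n ≥ 0 and t > 0: D_{n+1}(t) = (x t² + (ν+1+2n) t − y) D_n(t) + (2 n t y − n(n−1) t² − n(ν+1) t²) D_{n-1}(t) − n(n−1) t² y D_{n-2}(t). -/
/-!
Induction on `n`. Differentiating the identity for `n` at `t > 0`, multiplying by `t²` and
replacing each `t² D_k'` by `D_{k+1}` gives the identity for `n + 1`. That replacement is not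
available for `k < 0`, but exactly there the coefficients `n` and `n(n-1)` in front of
`D_{n-1}` and `D_{n-2}` vanish.
-/

open Real Set Filter

theorem contDiffOn_rpow_mul_exp_add_div (x y p : ℝ) :
    ContDiffOn ℝ ⊤ (fun t : ℝ => t ^ p * exp (x * t + y / t)) (Ioi 0) := by
  intro t ht
  have ht' : t ≠ 0 := (mem_Ioi.mp ht).ne'
  fun_prop (disch := assumption)

theorem sq_mul_deriv_rpow_mul_exp_add_div (x y p : ℝ) {t : ℝ} (ht : 0 < t) :
    t ^ 2 * deriv (fun s : ℝ => s ^ p * exp (x * s + y / s)) t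
      = (x * t ^ 2 + p * t - y) * (t ^ p * exp (x * t + y / t)) := by
  have ht' : t ≠ 0 := ht.ne'
  have h := (hasDerivAt_rpow_const (p := p) (Or.inl ht')).fun_mul
    (((hasDerivAt_id' t).const_mul x).fun_add
      ((hasDerivAt_const t y).fun_div (hasDerivAt_id' t) ht')).exp
  rw [h.deriv, rpow_sub_one ht']
  field_simp
  ring

def IsSqMulDerivChain (D : ℤ → ℝ → ℝ) : Prop :=
  ∀ n : ℤ, 1 ≤ n → ∀ t > 0, D n t = t ^ 2 * deriv (D (n - 1)) t

def fourTermRHS (x y ν : ℝ) (D : ℤ → ℝ → ℝ) (n : ℕ) (t : ℝ) : ℝ :=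
  (x * t ^ 2 + (ν + 1 + 2 * n) * t - y) * D n t +
    (2 * n * t * y - n * (n - 1) * t ^ 2 - n * (ν + 1) * t ^ 2) * D ((n : ℤ) - 1) t -
      n * (n - 1) * t ^ 2 * y * D ((n : ℤ) - 2) t

namespace IsSqMulDerivChain

variable {D : ℤ → ℝ → ℝ}

theorem contDiffOn (hrec : IsSqMulDerivChain D) (hD0 : ContDiffOn ℝ ⊤ (D 0) (Ioi 0)) :
    ∀ n : ℕ, ContDiffOn ℝ ⊤ (D n) (Ioi 0)
  | 0 => hD0
  | n + 1 => by
    have hderiv := (hrec.contDiffOn hD0 n).deriv_of_isOpen (m := ⊤) isOpen_Ioi le_top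
    refine ((contDiffOn_id.pow 2).mul hderiv).congr fun t ht => ?_
    simpa using hrec (n + 1) (by omega) t ht

theorem differentiableAt (hrec : IsSqMulDerivChain D) (hD0 : ContDiffOn ℝ ⊤ (D 0) (Ioi 0))
    (hm1 : D (-1) = 0) (hm2 : D (-2) = 0) {m : ℤ} (hm : -2 ≤ m) {t : ℝ} (ht : 0 < t) :
    DifferentiableAt ℝ (D m) t := by
  rcases (by omega : m = -2 ∨ m = -1 ∨ 0 ≤ m) with rfl | rfl | hm
  · exact hm2 ▸ differentiableAt_const 0
  · exact hm1 ▸ differentiableAt_const 0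
  · lift m to ℕ using hm
    exact ((hrec.contDiffOn hD0 m).differentiableOn (by simp)).differentiableAt
      (Ioi_mem_nhds ht)

theorem natCast_mul_sq_mul_deriv_sub_one (hrec : IsSqMulDerivChain D) (n : ℕ) {t : ℝ}
    (ht : 0 < t) : (n : ℝ) * (t ^ 2 * deriv (D ((n : ℤ) - 1)) t) = n * D n t := by
  rcases n with _ | n
  · simp
  · rw [hrec (n + 1 : ℕ) (by omega) t ht]

theorem natCast_mul_sub_one_mul_sq_mul_deriv_sub_two (hrec : IsSqMulDerivChain D) (n : ℕ)
    {t : ℝ} (ht : 0 < t) :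
    (n : ℝ) * (n - 1) * (t ^ 2 * deriv (D ((n : ℤ) - 2)) t)
      = n * (n - 1) * D ((n : ℤ) - 1) t := by
  rcases n with _ | _ | n
  · simp
  · simp
  · rw [hrec ((n + 2 : ℕ) - 1) (by omega) t ht, sub_sub, one_add_one_eq_two]

theorem eq_fourTermRHS_zero {x y ν : ℝ} (hrec : IsSqMulDerivChain D)
    (hD0 : ∀ t > 0, D 0 t = t ^ (ν + 1) * exp (x * t + y / t)) {t : ℝ} (ht : 0 < t) :
    D 1 t = fourTermRHS x y ν D 0 t := by
  have hnear : D 0 =ᶠ[nhds t] fun s => s ^ (ν + 1) * exp (x * s + y / s) :=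
    eventually_of_mem (Ioi_mem_nhds ht) hD0
  rw [hrec 1 le_rfl t ht, sub_self, hnear.deriv_eq, sq_mul_deriv_rpow_mul_exp_add_div x y _ ht,
    ← hD0 t ht]
  simp [fourTermRHS]

theorem eq_fourTermRHS_succ {x y ν : ℝ} (hrec : IsSqMulDerivChain D)
    (hdiff : ∀ m : ℤ, -2 ≤ m → ∀ t > 0, DifferentiableAt ℝ (D m) t) (n : ℕ)
    (ih : ∀ t > 0, D (n + 1) t = fourTermRHS x y ν D n t) {t : ℝ} (ht : 0 < t) :
    D ((n + 1 : ℕ) + 1) t = fourTermRHS x y ν D (n + 1) t := by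
  have hD (k : ℤ) (hk : -2 ≤ k) : HasDerivAt (D k) (deriv (D k) t) t :=
    (hdiff k hk t ht).hasDerivAt
  have hA := (((hasDerivAt_pow 2 t).const_mul x).fun_add
    ((hasDerivAt_id' t).const_mul (ν + 1 + 2 * n))).sub_const y
  have hB := ((((hasDerivAt_id' t).const_mul (2 * (n : ℝ))).mul_const y).fun_sub
    ((hasDerivAt_pow 2 t).const_mul ((n : ℝ) * (n - 1)))).fun_sub
    ((hasDerivAt_pow 2 t).const_mul ((n : ℝ) * (ν + 1)))
  have hC := ((hasDerivAt_pow 2 t).const_mul ((n : ℝ) * (n - 1))).mul_const y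
  have hRHS : HasDerivAt (fourTermRHS x y ν D n) _ t :=
    ((hA.fun_mul (hD n (by omega))).fun_add (hB.fun_mul (hD (n - 1) (by omega)))).fun_sub
      (hC.fun_mul (hD (n - 2) (by omega)))
  have hnear : D (n + 1) =ᶠ[nhds t] fourTermRHS x y ν D n :=
    eventually_of_mem (Ioi_mem_nhds ht) ih
  rw [hrec _ (by omega) t ht, Nat.cast_succ, add_sub_cancel_right, hnear.deriv_eq, hRHS.deriv]
  have h0 := hrec (n + 1) (by omega) t ht
  have h1 := hrec.natCast_mul_sq_mul_deriv_sub_one n ht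
  have h2 := hrec.natCast_mul_sub_one_mul_sq_mul_deriv_sub_two n ht
  have hIH := ih t ht
  have hidx : (n : ℤ) + 1 - 2 = n - 1 := by ring
  simp only [fourTermRHS, Nat.cast_succ, add_sub_cancel_right, hidx] at h0 hIH ⊢
  linear_combination (-(x * t ^ 2 + (ν + 1 + 2 * n) * t - y)) * h0
    + (2 * t * y - (n - 1) * t ^ 2 - (ν + 1) * t ^ 2) * h1 - t ^ 2 * y * h2 - 2 * t * hIH

end IsSqMulDerivChain

/-- the four-term recurrence satisfied by `Dₙ(t) = (t² d/dt)ⁿ D₀(t)`,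
with `D₀(t) = t^(ν+1) e^(x t + y/t)` and `D₋₁ = D₋₂ = 0`. -/
theorem stmt_1 (x y ν : ℝ) (D : ℤ → ℝ → ℝ)
    (hD0 : ∀ t > 0, D 0 t = t ^ (ν + 1) * Real.exp (x * t + y / t))
    (hrec : ∀ n : ℤ, 1 ≤ n → ∀ t > 0, D n t = t ^ 2 * deriv (D (n - 1)) t)
    (hm1 : D (-1) = 0) (hm2 : D (-2) = 0) :
    ∀ n : ℕ, ∀ t > 0,
      D ((n : ℤ) + 1) t =
        (x * t ^ 2 + (ν + 1 + 2 * n) * t - y) * D n t +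
          (2 * n * t * y - n * (n - 1) * t ^ 2 - n * (ν + 1) * t ^ 2) * D ((n : ℤ) - 1) t -
            n * (n - 1) * t ^ 2 * y * D ((n : ℤ) - 2) t := by
  have hchain : IsSqMulDerivChain D := hrec
  have hD0_smooth : ContDiffOn ℝ ⊤ (D 0) (Ioi 0) :=
    (contDiffOn_rpow_mul_exp_add_div x y (ν + 1)).congr hD0
  have hdiff (m : ℤ) (hm : -2 ≤ m) (t : ℝ) (ht : 0 < t) : DifferentiableAt ℝ (D m) t :=
    hchain.differentiableAt hD0_smooth hm1 hm2 hm ht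
  intro n
  induction n with
  | zero => exact fun t ht => hchain.eq_fourTermRHS_zero hD0 ht
  | succ n ih => exact fun t ht => hchain.eq_fourTermRHS_succ hdiff n ih ht
end

section
/- Define Q_n(x,y,ν) = 𝒟_n(x,y,ν,1)/n!, where 𝒟_n is generated by 𝒟_n = t² d/dt 𝒟_{n-1} with 𝒟_0(t) = t^{ν+1} e^{x t + y/t}. Then Q_0 = e^{x+y}, Q_1 = (x + ν + 1 − y) e^{x+y}, and for n ≥ 1 (with Q_{-1} = 0): (n+1) Q_{n+1} = (x + ν + 1 + 2n − y) Q_n + (2y − ν − n) Q_{n-1} − y Q_{n-2}. -/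
/-!
The substitution `u = -1/t` turns `t² d/dt` into `d/du`, so `𝒟ₙ(t) = g⁽ⁿ⁾(-1/t)` for
`g(u) = 𝒟₀(-1/u)`, and `Qₙ` is the `n`-th Taylor coefficient of `g` at `u = -1`. The function `g`
solves `u² g' = (x - (ν+1) u - y u²) g`; since both coefficients are quadratic in `u`, the Leibniz
rule for the `n`-th derivative of this equation has only three terms on each side, and at `u = -1`
it is the four-term recurrence multiplied by `n!`.
-/

open Real Set Filter Topology
open scoped ContDiff

theorem iteratedDeriv_quadratic_mul {𝕜 : Type*} [NontriviallyNormedField 𝕜] {h : 𝕜 → 𝕜}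
    {z : 𝕜} {n : ℕ} (a b c : 𝕜) (hh : ContDiffAt 𝕜 n h z) :
    iteratedDeriv n (fun u => (a + b * u + c * u ^ 2) * h u) z =
      (a + b * z + c * z ^ 2) * iteratedDeriv n h z
        + n * (b + 2 * c * z) * iteratedDeriv (n - 1) h z
        + n * (n - 1) * c * iteratedDeriv (n - 2) h z := by
  have hq1 : deriv (fun u => a + b * u + c * u ^ 2) = fun u => b + 2 * c * u := by
    ext u
    rw [deriv_fun_add (by fun_prop) (by fun_prop)]
    simp only [deriv_const_add', deriv_const_mul_id', deriv_const_mul_field', deriv_pow_field]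
    ring
  have hq2 : deriv (fun u => b + 2 * c * u) = fun _ => 2 * c := by
    ext u
    simp
  have hq3 (i : ℕ) : iteratedDeriv (i + 3) (fun u => a + b * u + c * u ^ 2) z = 0 := by
    simp [iteratedDeriv_succ', hq1, hq2]
  rw [iteratedDeriv_fun_mul (by fun_prop) hh]
  obtain _ | _ | n := n
  · simp
  · simp [Finset.sum_range_succ, hq1]
  · have hchoose : ((n + 2).choose 2 : 𝕜) * 2 = (n + 2) * (n + 1) := by
      have := Nat.choose_succ_right_eq (n + 2) 1
      norm_num at this
      simpa using congrArg (Nat.cast : ℕ → 𝕜) this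
    simp only [Finset.sum_range_succ' _ (n + 2), Finset.sum_range_succ' _ (n + 1),
      Finset.sum_range_succ' _ n, hq3, iteratedDeriv_succ' (n := 0), iteratedDeriv_succ' (n := 1),
      hq1, hq2]
    simp only [mul_zero, Nat.reduceSubDiff, zero_mul, Finset.sum_const_zero, zero_add,
      Nat.reduceAdd, iteratedDeriv_const_mul_field, iteratedDeriv_zero, Nat.choose_one_right, Nat.cast_add,
      Nat.cast_one, add_tsub_cancel_right, Nat.choose_zero_right, one_mul, tsub_zero,
      add_sub_cancel_right]
    linear_combination c * iteratedDeriv n h z * hchoose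

theorem sq_mul_deriv_comp_neg_inv {𝕜 : Type*} [NontriviallyNormedField 𝕜] {h : 𝕜 → 𝕜} {t : 𝕜}
    (ht : t ≠ 0) (hh : DifferentiableAt 𝕜 h (-t⁻¹)) :
    t ^ 2 * deriv (fun s => h (-s⁻¹)) t = deriv h (-t⁻¹) := by
  rw [show (fun s => h (-s⁻¹)) = h ∘ (-fun s => s⁻¹) from rfl,
    (hh.hasDerivAt.comp t (hasDerivAt_inv ht).neg).deriv]
  field_simp

noncomputable def seed (x y ν t : ℝ) : ℝ := t ^ (ν + 1) * exp (x * t + y / t)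

noncomputable def seedNegInv (x y ν u : ℝ) : ℝ := seed x y ν (-u⁻¹)

section seed

variable (x y ν : ℝ)

theorem hasDerivAt_seed {t : ℝ} (ht : 0 < t) :
    HasDerivAt (seed x y ν) ((x + (ν + 1) / t - y / t ^ 2) * seed x y ν t) t := by
  have hpow : HasDerivAt (fun s => s ^ (ν + 1)) ((ν + 1) * t ^ ν) t := by
    simpa using hasDerivAt_rpow_const (p := ν + 1) (Or.inl ht.ne')
  have hexp : HasDerivAt (fun s => exp (x * s + y / s))
      (exp (x * t + y / t) * (x - y / t ^ 2)) t := by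
    refine (((hasDerivAt_id' t).const_mul x).fun_add
      ((hasDerivAt_inv ht.ne').const_mul y)).exp.congr_deriv ?_
    simp only [div_eq_mul_inv]
    ring
  refine (hpow.mul hexp).congr_deriv ?_
  rw [seed, rpow_add ht, rpow_one]
  field_simp
  ring

theorem sq_mul_deriv_seedNegInv {u : ℝ} (hu : u < 0) :
    u ^ 2 * deriv (seedNegInv x y ν) u = (x - (ν + 1) * u - y * u ^ 2) * seedNegInv x y ν u := by
  have ht : 0 < -u⁻¹ := by simpa using hu
  rw [seedNegInv, show seedNegInv x y ν = fun s => seed x y ν (-s⁻¹) from rfl,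
    sq_mul_deriv_comp_neg_inv hu.ne (hasDerivAt_seed x y ν ht).differentiableAt,
    (hasDerivAt_seed x y ν ht).deriv]
  field_simp
  ring

theorem contDiffOn_seedNegInv : ContDiffOn ℝ ∞ (seedNegInv x y ν) (Iio 0) := by
  intro u hu
  have hu0 : u ≠ 0 := ne_of_lt hu
  have ht0 : -u⁻¹ ≠ 0 := by simpa using hu0
  refine ContDiffAt.contDiffWithinAt ?_
  unfold seedNegInv seed
  fun_prop (disch := assumption)

theorem contDiffOn_iteratedDeriv_seedNegInv (n : ℕ) :
    ContDiffOn ℝ ∞ (iteratedDeriv n (seedNegInv x y ν)) (Iio 0) := by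
  induction n with
  | zero => simpa using contDiffOn_seedNegInv x y ν
  | succ n ih =>
    rw [iteratedDeriv_succ]
    exact ih.deriv_of_isOpen isOpen_Iio le_rfl

theorem iteratedDeriv_seedNegInv_recurrence {u : ℝ} (hu : u < 0) (n : ℕ) :
    u ^ 2 * iteratedDeriv (n + 1) (seedNegInv x y ν) u
        + 2 * n * u * iteratedDeriv n (seedNegInv x y ν) u
        + n * (n - 1) * iteratedDeriv (n - 1) (seedNegInv x y ν) u =
      (x - (ν + 1) * u - y * u ^ 2) * iteratedDeriv n (seedNegInv x y ν) u
        + n * (-(ν + 1) - 2 * y * u) * iteratedDeriv (n - 1) (seedNegInv x y ν) u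
        - n * (n - 1) * y * iteratedDeriv (n - 2) (seedNegInv x y ν) u := by
  set g := seedNegInv x y ν
  have hsmooth (k : ℕ) : ContDiffAt ℝ n (iteratedDeriv k g) u :=
    ((contDiffOn_iteratedDeriv_seedNegInv x y ν k).contDiffAt (Iio_mem_nhds hu)).of_le
      (by exact_mod_cast le_top)
  have hode : (fun v => (0 + 0 * v + 1 * v ^ 2) * deriv g v) =ᶠ[𝓝 u]
      fun v => (x + -(ν + 1) * v + -y * v ^ 2) * g v := by
    filter_upwards [Iio_mem_nhds hu] with v hv
    linear_combination sq_mul_deriv_seedNegInv x y ν hv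
  have key := hode.iteratedDeriv_eq n
  rw [iteratedDeriv_quadratic_mul _ _ _ (by simpa using hsmooth 1),
    iteratedDeriv_quadratic_mul _ _ _ (by simpa using hsmooth 0)] at key
  simp only [← iteratedDeriv_succ'] at key
  obtain _ | _ | n := n
  · linear_combination key
  · linear_combination key
  · simp only [Nat.reduceSubDiff, add_tsub_cancel_right] at key ⊢
    linear_combination key

end seed

theorem eq_iteratedDeriv_seedNegInv {x y ν : ℝ} {D : ℕ → ℝ → ℝ}
    (hD0 : ∀ t > 0, D 0 t = t ^ (ν + 1) * Real.exp (x * t + y / t))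
    (hrec : ∀ n : ℕ, D (n + 1) = fun t => t ^ 2 * deriv (D n) t) (n : ℕ) {t : ℝ} (ht : 0 < t) :
    D n t = iteratedDeriv n (seedNegInv x y ν) (-t⁻¹) := by
  induction n generalizing t with
  | zero => simp [seedNegInv, seed, hD0 t ht]
  | succ n ih =>
    have hloc : D n =ᶠ[𝓝 t] fun s => iteratedDeriv n (seedNegInv x y ν) (-s⁻¹) := by
      filter_upwards [Ioi_mem_nhds ht] with s hs using ih hs
    have hdiff : DifferentiableAt ℝ (iteratedDeriv n (seedNegInv x y ν)) (-t⁻¹) :=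
      ((contDiffOn_iteratedDeriv_seedNegInv x y ν n).differentiableOn (by simp)).differentiableAt
        (Iio_mem_nhds (by simpa using ht))
    simp only [hrec]
    rw [hloc.deriv_eq, sq_mul_deriv_comp_neg_inv ht.ne' hdiff, iteratedDeriv_succ]

noncomputable def seedCoeff (x y ν : ℝ) (n : ℕ) : ℝ :=
  iteratedDeriv n (seedNegInv x y ν) (-1) / n.factorial

section seedCoeff

variable (x y ν : ℝ)

theorem iteratedDeriv_seedNegInv_neg_one (n : ℕ) :
    iteratedDeriv (n + 1) (seedNegInv x y ν) (-1) =
      (x + ν + 1 + 2 * n - y) * iteratedDeriv n (seedNegInv x y ν) (-1)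
        + n * (2 * y - ν - n) * iteratedDeriv (n - 1) (seedNegInv x y ν) (-1)
        - n * (n - 1) * y * iteratedDeriv (n - 2) (seedNegInv x y ν) (-1) := by
  linear_combination iteratedDeriv_seedNegInv_recurrence x y ν neg_one_lt_zero n

theorem seedCoeff_zero : seedCoeff x y ν 0 = exp (x + y) := by
  simp [seedCoeff, seedNegInv, seed]

theorem seedCoeff_one : seedCoeff x y ν 1 = (x + ν + 1 - y) * exp (x + y) := by
  simpa [seedCoeff, seedNegInv, seed] using iteratedDeriv_seedNegInv_neg_one x y ν 0

theorem seedCoeff_two :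
    2 * seedCoeff x y ν 2 =
      (x + ν + 3 - y) * seedCoeff x y ν 1 + (2 * y - ν - 1) * seedCoeff x y ν 0 := by
  have h := iteratedDeriv_seedNegInv_neg_one x y ν 1
  simp only [seedCoeff, Nat.factorial]
  norm_num at h ⊢
  linear_combination h

theorem seedCoeff_succ {n : ℕ} (hn : 2 ≤ n) :
    (n + 1) * seedCoeff x y ν (n + 1) =
      (x + ν + 1 + 2 * n - y) * seedCoeff x y ν n + (2 * y - ν - n) * seedCoeff x y ν (n - 1)
        - y * seedCoeff x y ν (n - 2) := by
  obtain ⟨m, rfl⟩ := Nat.exists_eq_add_of_le' hn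
  have h := iteratedDeriv_seedNegInv_neg_one x y ν (m + 2)
  simp only [Nat.add_sub_cancel, Nat.add_succ_sub_one] at h ⊢
  simp only [seedCoeff, Nat.factorial_succ]
  push_cast at h ⊢
  field_simp
  linear_combination h

end seedCoeff

/-- `Qₙ = Dₙ(1)/n!` satisfies `Q₀ = e^(x+y)`, `Q₁ = (x+ν+1−y) e^(x+y)` and the
four-term recurrence `(n+1) Qₙ₊₁ = (x+ν+1+2n−y) Qₙ + (2y−ν−n) Qₙ₋₁ − y Qₙ₋₂` for `n ≥ 1`,
with `Q₋₁ = 0`. -/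
theorem stmt_3 (x y ν : ℝ) (D : ℕ → ℝ → ℝ) (Q : ℤ → ℝ)
    (hD0 : ∀ t > 0, D 0 t = t ^ (ν + 1) * Real.exp (x * t + y / t))
    (hrec : ∀ n : ℕ, D (n + 1) = fun t => t ^ 2 * deriv (D n) t)
    (hQ : ∀ n : ℕ, Q n = D n 1 / (n.factorial : ℝ))
    (hQm1 : Q (-1) = 0) :
    Q 0 = Real.exp (x + y) ∧
    Q 1 = (x + ν + 1 - y) * Real.exp (x + y) ∧
    ∀ n : ℕ, 1 ≤ n →
      ((n : ℝ) + 1) * Q ((n : ℤ) + 1) =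
        (x + ν + 1 + 2 * n - y) * Q n + (2 * y - ν - n) * Q ((n : ℤ) - 1) - y * Q ((n : ℤ) - 2) := by
  have hQc (k : ℕ) : Q k = seedCoeff x y ν k := by
    rw [hQ, eq_iteratedDeriv_seedNegInv hD0 hrec k one_pos, inv_one, seedCoeff]
  obtain ⟨hQ0, hQ1, hQ2⟩ : Q 0 = seedCoeff x y ν 0 ∧ Q 1 = seedCoeff x y ν 1 ∧
      Q 2 = seedCoeff x y ν 2 := ⟨hQc 0, hQc 1, hQc 2⟩
  refine ⟨hQ0.trans (seedCoeff_zero x y ν), hQ1.trans (seedCoeff_one x y ν), fun n hn => ?_⟩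
  obtain rfl | hn := hn.eq_or_lt
  · norm_num [hQm1, hQ0, hQ1, hQ2]
    linear_combination seedCoeff_two x y ν
  · rw [show (n : ℤ) + 1 = ((n + 1 : ℕ) : ℤ) by push_cast; rfl,
      show (n : ℤ) - 1 = ((n - 1 : ℕ) : ℤ) by omega, show (n : ℤ) - 2 = ((n - 2 : ℕ) : ℤ) by omega,
      hQc, hQc, hQc, hQc]
    exact_mod_cast seedCoeff_succ x y ν hn
end
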